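/- The three-qubit NAND state ψ_NAND is logically but not strongly contextual for the measurements Y and Z at each party: (1) there exists a consistent global assignment; and (2) there exist a context c : Fin 3 → M and a possible outcome o in c (nonzero amplitude) such that no consistent global assignment g satisfies g i (c i) = o i for all i. -/
import Mathlib


noncomputable section

/-- Inner product of two `n`-qubit states `(Fin n → Bool) → ℂ`. -/
def inner' {n : ℕ} (φ ψ : (Fin n → Bool) → ℂ) : ℂ :=
  ∑ s : Fin n → Bool, (starRingEnd ℂ) (φ s) * ψ s

/-- Tensor product of local vectors. -/
def tensor {n : ℕ} (v : Fin n → Bool → ℂ) : (Fin n → Bool) → ℂ :=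
  fun s => ∏ i, v i (s i)

/-- `Y`-measurement eigenvectors: `yvec false = (1/√2, i/√2)`,
`yvec true = (1/√2, -i/√2)`. -/
def yvec (b : Bool) : Bool → ℂ :=
  fun b' => if b' then (if b then -Complex.I else Complex.I) * (Real.sqrt 2 : ℂ)⁻¹
    else (Real.sqrt 2 : ℂ)⁻¹

/-- `Z`-measurement eigenvectors. -/
def evec (b : Bool) : Bool → ℂ := fun b' => if b = b' then 1 else 0

/-- The measurement set: `Y` or `Z` at each site. -/
inductive M | Y | Z

/-- The eigenvector family of each measurement. -/
def mvec : M → Bool → Bool → ℂ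
  | M.Y => yvec
  | M.Z => evec

/-- The amplitude of outcome `o` in context `c` for a 3-qubit state `ψ`. -/
def amp (ψ : (Fin 3 → Bool) → ℂ) (c : Fin 3 → M) (o : Fin 3 → Bool) : ℂ :=
  inner' (tensor fun i => mvec (c i) (o i)) ψ

/-- A global assignment is consistent if its induced outcome is possible in
every context. -/
def consistent (ψ : (Fin 3 → Bool) → ℂ) (g : Fin 3 → M → Bool) : Prop :=
  ∀ c : Fin 3 → M, amp ψ c (fun i => g i (c i)) ≠ 0

/-- The three-qubit NAND state. -/
def psiNAND : (Fin 3 → Bool) → ℂ :=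
  fun s => if s 2 = !(s 0 && s 1) then (1/2 : ℂ) else 0


def triEquiv : Bool × Bool × Bool ≃ (Fin 3 → Bool) where
  toFun x := ![x.1, x.2.1, x.2.2]
  invFun s := (s 0, s 1, s 2)
  left_inv := by decide
  right_inv := by decide

lemma amp_eq (c : Fin 3 → M) (o : Fin 3 → Bool) :
    amp psiNAND c o =
      ((starRingEnd ℂ) (mvec (c 0) (o 0) false) * (starRingEnd ℂ) (mvec (c 1) (o 1) false) *
        (starRingEnd ℂ) (mvec (c 2) (o 2) true)
      + (starRingEnd ℂ) (mvec (c 0) (o 0) false) * (starRingEnd ℂ) (mvec (c 1) (o 1) true) *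
        (starRingEnd ℂ) (mvec (c 2) (o 2) true)
      + (starRingEnd ℂ) (mvec (c 0) (o 0) true) * (starRingEnd ℂ) (mvec (c 1) (o 1) false) *
        (starRingEnd ℂ) (mvec (c 2) (o 2) true)
      + (starRingEnd ℂ) (mvec (c 0) (o 0) true) * (starRingEnd ℂ) (mvec (c 1) (o 1) true) *
        (starRingEnd ℂ) (mvec (c 2) (o 2) false)) * (1 / 2) := by
  rw [amp, inner', ← Equiv.sum_comp triEquiv]
  simp [Fintype.sum_prod_type, Fintype.sum_bool, tensor, psiNAND, triEquiv,
    Fin.prod_univ_three, map_mul]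
  ring

def g1 : Fin 3 → M → Bool :=
  ![fun _ => false, fun _ => false, fun m => match m with | M.Y => false | M.Z => true]

lemma hs2 : ((Real.sqrt 2 : ℝ) : ℂ) ≠ 0 := by
  simp [Real.sqrt_eq_zero']

lemma hpow : ((Real.sqrt 2 : ℝ) : ℂ) ^ 2 = 2 := by
  rw [← Complex.ofReal_pow, Real.sq_sqrt] <;> norm_num

lemma g1_consistent : consistent psiNAND g1 := by
  intro c
  rcases h0 : c 0 with _|_ <;> rcases h1 : c 1 <;> rcases h2 : c 2 <;>
    rw [amp_eq] <;>
    simp only [h0, h1, h2, g1, mvec, yvec, evec, map_mul, map_inv₀, Complex.conj_ofReal,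
      Complex.conj_I, map_one, map_zero, if_true, if_false, Matrix.cons_val_zero,
      Matrix.cons_val_one, Matrix.head_cons, Matrix.cons_val_two, Matrix.tail_cons] <;>
    norm_num <;>
    (intro h; field_simp at h; ring_nf at h; simp only [hpow, Complex.ext_iff, Complex.add_re,
      Complex.add_im, Complex.mul_re, Complex.mul_im, Complex.I_re, Complex.I_im,
      Complex.one_re, Complex.one_im, Complex.ofReal_re, Complex.ofReal_im, Complex.neg_re,
      Complex.neg_im] at h
     norm_num at h)

/-- The NAND state is logically but not strongly contextual for `Y`/`Z`
measurements: some global assignment is consistent, and there is a context `c`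
and a possible outcome `o` in `c` that is extended by no consistent global
assignment. -/
theorem nand_logically_not_strongly_contextual :
    (∃ g : Fin 3 → M → Bool, consistent psiNAND g) ∧
    ∃ (c : Fin 3 → M) (o : Fin 3 → Bool), amp psiNAND c o ≠ 0 ∧
      ∀ g : Fin 3 → M → Bool, consistent psiNAND g → ¬ ∀ i, g i (c i) = o i := by
  refine ⟨⟨g1, g1_consistent⟩, ![M.Y, M.Y, M.Z], ![false, true, false], ?_, ?_⟩
  · rw [amp_eq]
    simp only [mvec, yvec, evec, map_mul, map_inv₀, Complex.conj_ofReal,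
      Complex.conj_I, map_one, map_zero, if_true, if_false, Matrix.cons_val_zero,
      Matrix.cons_val_one, Matrix.head_cons, Matrix.cons_val_two, Matrix.tail_cons]
    norm_num
  · intro g hg h
    have e0 := h 0
    have e1 := h 1
    have e2 := h 2
    simp only [Matrix.cons_val_zero, Matrix.cons_val_one, Matrix.head_cons,
      Matrix.cons_val_two, Matrix.tail_cons] at e0 e1 e2
    rcases hb : g 1 M.Z with _|_
    · refine hg ![M.Y, M.Z, M.Z] ?_
      rw [amp_eq]
      simp [e0, e1, e2, hb, mvec, yvec, evec, map_inv₀, Complex.conj_ofReal]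
    · rcases hc : g 2 M.Y with _|_
      · rcases ha : g 0 M.Z with _|_
        · refine hg ![M.Z, M.Y, M.Z] ?_
          rw [amp_eq]
          simp [e0, e1, e2, ha, hb, hc, mvec, yvec, evec, map_inv₀, Complex.conj_ofReal]
        · refine hg ![M.Z, M.Y, M.Y] ?_
          rw [amp_eq]
          simp [e0, e1, e2, ha, hb, hc, mvec, yvec, evec, map_inv₀, Complex.conj_ofReal]
          ring_nf
      · refine hg ![M.Y, M.Z, M.Y] ?_
        rw [amp_eq]
        simp [e0, e1, e2, hb, hc, mvec, yvec, evec, map_inv₀, Complex.conj_ofReal]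
        ring_nf
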